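/- Let F : ℝ×ℝⁿ → ℝ^{m×n} and D : ℝ×ℝⁿ → ℝᵐ be C² maps, and define P_i = Σ_α F_{αi} D_α and h = √(|D|² + |P|² + ξ(F)) (which is positive since ξ(F) ≥ 1). Assume F satisfies the curl-free condition ∂_j F_{αi} = ∂_i F_{αj} for all α,i,j, and the evolution equation ∂_t F_{αi} + ∂_i( (D_α + Σ_j F_{αj} P_j)/h ) = 0. Then for every k with 1 ≤ k ≤ min{m,n} and every A = {α_1 < … < α_k} ⊆ {1,…,m}, I = {i_1 < … < i_k} ⊆ {1,…,n}, the minor [F]_{A,I} satisfies the conservation law ∂_t [F]_{A,I} = − Σ_{p,q=1}^{k} (−1)^{p+q} ∂_{i_q}( [F]_{A∖{α_p}, I∖{i_q}} (D_{α_p} + Σ_j F_{α_p j} P_j)/h ). -/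

import Mathlib

open Matrix

/-- The minor of a real matrix `F` with respect to the row set `A` and column set `I`
(rows and columns taken in increasing order).  By convention `[F]_{∅,∅} = 1`. -/
noncomputable def mminor {m n : ℕ} (F : Matrix (Fin m) (Fin n) ℝ)
    (A : Finset (Fin m)) (I : Finset (Fin n)) : ℝ :=
  if h : A.card = I.card then
    Matrix.det (Matrix.of fun p q : Fin I.card =>
      F (A.orderEmbOfFin h p) (I.orderEmbOfFin rfl q))
  else 0

/-- Time derivative `∂_t f` of a function of `(t,x) ∈ ℝ × ℝⁿ`. -/
noncomputable def pt {n : ℕ} (f : ℝ × (Fin n → ℝ) → ℝ) (p : ℝ × (Fin n → ℝ)) : ℝ :=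
  fderiv ℝ f p (1, 0)

/-- Spatial partial derivative `∂_i f` of a function of `(t,x) ∈ ℝ × ℝⁿ`. -/
noncomputable def px {n : ℕ} (i : Fin n) (f : ℝ × (Fin n → ℝ) → ℝ) (p : ℝ × (Fin n → ℝ)) : ℝ :=
  fderiv ℝ f p (0, Pi.single i 1)

/-!
Jacobi's formula `∂ det M = Σ_{i,j} adj(M)_{ji} ∂M_{ij}` and the evolution equation give
`∂_t det M = -Σ_{i,j} adj(M)_{ji} ∂_j G_i`, where `M` is the `k × k` submatrix `[F_{α_p i_q}]` and
`G_p = (D_{α_p} + Σ_j F_{α_p j} P_j)/h`. Because `M` is curl-free, the Piola identity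
`Σ_j ∂_j adj(M)_{ji} = 0` holds, so the derivative may be moved outside:
`Σ_j adj(M)_{ji} ∂_j G_i = Σ_j ∂_j (adj(M)_{ji} G_i)`. Finally, the entries of the adjugate of `M`
are the signed complementary minors `[F]_{A∖{α_p}, I∖{i_q}}`.
-/

theorem Matrix.det_updateRow_eq_sum_mul_adjugate {ι R : Type*} [Fintype ι] [DecidableEq ι]
    [CommRing R] (A : Matrix ι ι R) (i : ι) (b : ι → R) :
    (A.updateRow i b).det = ∑ j, b j * adjugate A j i := by
  rw [← cramer_transpose_apply, cramer_eq_adjugate_mulVec, ← adjugate_transpose]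
  simp only [mulVec, dotProduct, transpose_apply, mul_comm]

theorem Matrix.adjugate_updateRow_single_swap {ι R : Type*} [Fintype ι] [DecidableEq ι]
    [CommRing R] (A : Matrix ι ι R) {i r : ι} (hri : r ≠ i) (j s : ι) :
    adjugate (A.updateRow i (Pi.single j 1)) s r
      = -adjugate (A.updateRow i (Pi.single s 1)) j r := by
  have hswap : (A.updateRow i (Pi.single s 1)).updateRow r (Pi.single j 1)
      = ((A.updateRow i (Pi.single j 1)).updateRow r (Pi.single s 1)).submatrix
          (Equiv.swap i r) id := by
    ext a b
    simp only [submatrix_apply, id_eq, updateRow_apply, Equiv.swap_apply_def]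
    split_ifs <;> simp_all
  rw [adjugate_apply, adjugate_apply, hswap, det_permute, Equiv.Perm.sign_swap hri.symm]
  simp

theorem Finset.sum_sum_mul_eq_zero_of_antisymm_of_symm {ι R : Type*} [Fintype ι] [Ring R]
    [IsAddTorsionFree R] {a c : ι → ι → R} (ha : ∀ i j, a i j = -a j i)
    (hc : ∀ i j, c i j = c j i) : ∑ i, ∑ j, a i j * c i j = 0 := by
  refine self_eq_neg.mp ?_
  calc ∑ i, ∑ j, a i j * c i j = ∑ i, ∑ j, a j i * c j i := Finset.sum_comm
    _ = -∑ i, ∑ j, a i j * c i j := by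
      simp only [← Finset.sum_neg_distrib, ← neg_mul, ← ha, hc]

noncomputable def Matrix.detRowContinuousAlternating (𝕜 ι : Type*) [NontriviallyNormedField 𝕜]
    [Fintype ι] [DecidableEq ι] : (ι → 𝕜) [⋀^ι]→L[𝕜] 𝕜 :=
  { detRowAlternating with cont := continuous_id.matrix_det }

section DetDerivative

variable {𝕜 ι E : Type*} [NontriviallyNormedField 𝕜] [DecidableEq ι] [NormedAddCommGroup E]
  [NormedSpace 𝕜 E] {f : E → Matrix ι ι 𝕜} {x : E}

theorem differentiableAt_updateRow_apply (hf : ∀ i j, DifferentiableAt 𝕜 (fun y => f y i j) x)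
    (i : ι) (b : ι → 𝕜) (r s : ι) :
    DifferentiableAt 𝕜 (fun y => (f y).updateRow i b r s) x := by
  by_cases hr : r = i
  · simp only [hr, updateRow_self, differentiableAt_const]
  · simpa only [updateRow_ne hr] using hf r s

theorem fderiv_updateRow_apply (i : ι) (b : ι → 𝕜) (r s : ι) :
    fderiv 𝕜 (fun y => (f y).updateRow i b r s) x
      = if r = i then 0 else fderiv 𝕜 (fun y => f y r s) x := by
  by_cases hr : r = i
  · simp only [hr, updateRow_self, fderiv_const_apply, if_true]
  · simp only [updateRow_ne hr, if_neg hr]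

variable [Fintype ι]

theorem hasFDerivAt_det {f' : ι → ι → E →L[𝕜] 𝕜}
    (hf : ∀ i j, HasFDerivAt (fun y => f y i j) (f' i j) x) :
    HasFDerivAt (fun y => (f y).det) (∑ i, ∑ j, adjugate (f x) j i • f' i j) x := by
  have hrows : HasFDerivAt (fun y i j => f y i j)
      (ContinuousLinearMap.pi fun i => ContinuousLinearMap.pi (f' i)) x :=
    hasFDerivAt_pi.mpr fun i => hasFDerivAt_pi.mpr (hf i)
  refine (((detRowContinuousAlternating 𝕜 ι).hasFDerivAt fun i j => f x i j).comp x
    hrows).congr_fderiv ?_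
  ext v
  rw [ContinuousLinearMap.comp_apply, ContinuousMultilinearMap.linearDeriv_apply]
  simp only [FunLike.coe_sum, Finset.sum_apply, FunLike.coe_smul, Pi.smul_apply, smul_eq_mul]
  refine Finset.sum_congr rfl fun i _ => ?_
  simp only [mul_comm (adjugate _ _ _), ← det_updateRow_eq_sum_mul_adjugate]
  rfl

theorem differentiableAt_det (hf : ∀ i j, DifferentiableAt 𝕜 (fun y => f y i j) x) :
    DifferentiableAt 𝕜 (fun y => (f y).det) x :=
  (hasFDerivAt_det fun i j => (hf i j).hasFDerivAt).differentiableAt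

theorem fderiv_det_apply (hf : ∀ i j, DifferentiableAt 𝕜 (fun y => f y i j) x) (v : E) :
    fderiv 𝕜 (fun y => (f y).det) x v
      = ∑ i, ∑ j, adjugate (f x) j i * fderiv 𝕜 (fun y => f y i j) x v := by
  simp [(hasFDerivAt_det fun i j => (hf i j).hasFDerivAt).fderiv]

theorem differentiableAt_adjugate_apply (hf : ∀ i j, DifferentiableAt 𝕜 (fun y => f y i j) x)
    (i j : ι) : DifferentiableAt 𝕜 (fun y => adjugate (f y) i j) x := by
  simp only [adjugate_apply]
  exact differentiableAt_det (differentiableAt_updateRow_apply hf j _)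

-- The Piola identity: the rows of the adjugate of a curl-free matrix field are divergence-free.
theorem sum_fderiv_adjugate_eq_zero [CharZero 𝕜]
    (hf : ∀ i j, DifferentiableAt 𝕜 (fun y => f y i j) x) {e : ι → E}
    (hcurl : ∀ i j j', fderiv 𝕜 (fun y => f y i j) x (e j') = fderiv 𝕜 (fun y => f y i j') x (e j))
    (i : ι) : ∑ j, fderiv 𝕜 (fun y => adjugate (f y) j i) x (e j) = 0 := by
  simp only [adjugate_apply, fderiv_det_apply (differentiableAt_updateRow_apply hf i _),
    fderiv_updateRow_apply]
  rw [Finset.sum_comm]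
  refine Finset.sum_eq_zero fun r _ => ?_
  by_cases hr : r = i
  · simp [hr]
  · simp only [if_neg hr, ← adjugate_apply]
    exact Finset.sum_sum_mul_eq_zero_of_antisymm_of_symm
      (fun j s => adjugate_updateRow_single_swap (f x) hr j s) (fun j s => hcurl r s j)

theorem fderiv_det_eq_neg_sum_fderiv_adjugate_mul [CharZero 𝕜] {G : E → ι → 𝕜} {τ : E}
    {e : ι → E}
    (hf : ∀ i j, DifferentiableAt 𝕜 (fun y => f y i j) x)
    (hG : ∀ i, DifferentiableAt 𝕜 (fun y => G y i) x)
    (hcurl : ∀ i j j', fderiv 𝕜 (fun y => f y i j) x (e j') = fderiv 𝕜 (fun y => f y i j') x (e j))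
    (hevol : ∀ i j, fderiv 𝕜 (fun y => f y i j) x τ = -fderiv 𝕜 (fun y => G y i) x (e j)) :
    fderiv 𝕜 (fun y => (f y).det) x τ
      = -∑ i, ∑ j, fderiv 𝕜 (fun y => adjugate (f y) j i * G y i) x (e j) := by
  have hleibniz (i j : ι) : fderiv 𝕜 (fun y => adjugate (f y) j i * G y i) x (e j)
      = adjugate (f x) j i * fderiv 𝕜 (fun y => G y i) x (e j)
        + G x i * fderiv 𝕜 (fun y => adjugate (f y) j i) x (e j) := by
    simp [fderiv_fun_mul (differentiableAt_adjugate_apply hf j i) (hG i)]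
  simp only [hleibniz, Finset.sum_add_distrib, ← Finset.mul_sum,
    sum_fderiv_adjugate_eq_zero hf hcurl, mul_zero, add_zero,
    fderiv_det_apply hf, hevol, mul_neg, Finset.sum_neg_distrib]

end DetDerivative

theorem Finset.orderEmbOfFin_erase_apply {α : Type*} [LinearOrder α] {s : Finset α} {k : ℕ}
    (h : s.card = k + 1) (p : Fin (k + 1)) (h' : (s.erase (s.orderEmbOfFin h p)).card = k)
    (q : Fin k) :
    (s.erase (s.orderEmbOfFin h p)).orderEmbOfFin h' q = s.orderEmbOfFin h (p.succAbove q) := by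
  have hmem (q : Fin k) : s.orderEmbOfFin h (p.succAbove q) ∈ s.erase (s.orderEmbOfFin h p) :=
    Finset.mem_erase.mpr ⟨fun hq => p.succAbove_ne q ((s.orderEmbOfFin h).injective hq),
      Finset.orderEmbOfFin_mem s h _⟩
  exact (congrFun (Finset.orderEmbOfFin_unique h' hmem
    ((s.orderEmbOfFin h).strictMono.comp p.strictMono_succAbove)) q).symm

theorem mminor_eq_det_submatrix {m n k : ℕ} (F : Matrix (Fin m) (Fin n) ℝ) {A : Finset (Fin m)}
    {I : Finset (Fin n)} (hA : A.card = k) (hI : I.card = k) :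
    mminor F A I = (F.submatrix (A.orderEmbOfFin hA) (I.orderEmbOfFin hI)).det := by
  subst hI
  rw [mminor, dif_pos hA]
  rfl

theorem adjugate_submatrix_orderEmbOfFin {m n k : ℕ} (F : Matrix (Fin m) (Fin n) ℝ)
    {A : Finset (Fin m)} {I : Finset (Fin n)} (hA : A.card = k) (hI : I.card = k) (p q : Fin k) :
    adjugate (F.submatrix (A.orderEmbOfFin hA) (I.orderEmbOfFin hI)) q p
      = (-1) ^ (p + q : ℕ)
        * mminor F (A.erase (A.orderEmbOfFin hA p)) (I.erase (I.orderEmbOfFin hI q)) := by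
  cases k with
  | zero => exact p.elim0
  | succ k =>
    have hA' : (A.erase (A.orderEmbOfFin hA p)).card = k := by
      simp [Finset.card_erase_of_mem, hA]
    have hI' : (I.erase (I.orderEmbOfFin hI q)).card = k := by
      simp [Finset.card_erase_of_mem, hI]
    rw [adjugate_fin_succ_eq_det_submatrix, submatrix_submatrix, mminor_eq_det_submatrix F hA' hI']
    congr 3 <;> ext r <;> simp [Finset.orderEmbOfFin_erase_apply]

theorem det_one_add_transpose_mul_self_pos {m n : Type*} [Fintype m] [Fintype n] [DecidableEq n]
    (M : Matrix m n ℝ) : 0 < (1 + Mᵀ * M).det := by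
  have hMM : (Mᵀ * M).PosSemidef := by
    simpa only [conjTranspose_eq_transpose_of_trivial] using posSemidef_conjTranspose_mul_self M
  exact (PosDef.one.add_posSemidef hMM).det_pos

theorem differentiableAt_det_one_add_transpose_mul_self {E : Type*} [NormedAddCommGroup E]
    [NormedSpace ℝ E] {m n : Type*} [Fintype m] [Fintype n] [DecidableEq n]
    {F : E → Matrix m n ℝ} {x : E} (hF : ∀ α i, DifferentiableAt ℝ (fun y => F y α i) x) :
    DifferentiableAt ℝ (fun y => (1 + (F y)ᵀ * F y).det) x := by
  refine differentiableAt_det fun i j => ?_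
  simp only [Matrix.add_apply, one_apply, mul_apply, transpose_apply]
  fun_prop

theorem fderiv_const_mul_field_apply {𝕜 E : Type*} [NontriviallyNormedField 𝕜]
    [NormedAddCommGroup E] [NormedSpace 𝕜 E] (c : 𝕜) (g : E → 𝕜) (x v : E) :
    fderiv 𝕜 (fun y => c * g y) x v = c * fderiv 𝕜 g x v := by
  rw [show (fun y => c * g y) = c • g from rfl, fderiv_const_smul_field]
  rfl

theorem conservation_law_for_minors_general (m n : ℕ)
    (F : ℝ × (Fin n → ℝ) → Matrix (Fin m) (Fin n) ℝ)
    (D : ℝ × (Fin n → ℝ) → Fin m → ℝ)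
    (hF : ∀ α i, ContDiff ℝ 2 fun p => F p α i)
    (hD : ∀ α, ContDiff ℝ 2 fun p => D p α)
    (P : ℝ × (Fin n → ℝ) → Fin n → ℝ)
    (hP : P = fun p i => ∑ α, F p α i * D p α)
    (h : ℝ × (Fin n → ℝ) → ℝ)
    (hh : h = fun p => Real.sqrt (∑ α, (D p α) ^ 2 + ∑ i, (P p i) ^ 2 + (1 + (F p)ᵀ * F p).det))
    (hcurl : ∀ p (α : Fin m) (i j : Fin n),
      px j (fun q => F q α i) p = px i (fun q => F q α j) p)
    (hevol : ∀ p (α : Fin m) (i : Fin n),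
      pt (fun q => F q α i) p
        + px i (fun q => (D q α + ∑ j, F q α j * P q j) / h q) p = 0)
    (k : ℕ)
    (A : Finset (Fin m)) (I : Finset (Fin n)) (hA : A.card = k) (hI : I.card = k)
    (p : ℝ × (Fin n → ℝ)) :
    pt (fun q => mminor (F q) A I) p =
      - ∑ pp : Fin k, ∑ qq : Fin k, (-1 : ℝ) ^ ((pp.val + 1) + (qq.val + 1)) *
          px (I.orderEmbOfFin hI qq)
            (fun q =>
              mminor (F q) (A.erase (A.orderEmbOfFin hA pp)) (I.erase (I.orderEmbOfFin hI qq))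
                * (D q (A.orderEmbOfFin hA pp) + ∑ j, F q (A.orderEmbOfFin hA pp) j * P q j)
                / h q) p := by
  have hFd α i : Differentiable ℝ fun q => F q α i := (hF α i).differentiable two_ne_zero
  have hDd α : Differentiable ℝ fun q => D q α := (hD α).differentiable two_ne_zero
  have hPd i : Differentiable ℝ fun q => P q i := by subst hP; fun_prop
  have hpos q : 0 < ∑ α, (D q α) ^ 2 + ∑ i, (P q i) ^ 2 + (1 + (F q)ᵀ * F q).det := by
    have := det_one_add_transpose_mul_self_pos (F q)
    positivity
  have hhd : Differentiable ℝ h := by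
    subst hh
    exact fun q => ((DifferentiableAt.fun_sum fun α _ => (hDd α q).pow 2).add
      (DifferentiableAt.fun_sum fun i _ => (hPd i q).pow 2)
      |>.add (differentiableAt_det_one_add_transpose_mul_self fun α i => hFd α i q)).sqrt
      (hpos q).ne'
  have hh0 q : h q ≠ 0 := by
    subst hh
    exact (Real.sqrt_pos.mpr (hpos q)).ne'
  have hflux α : Differentiable ℝ fun q => (D q α + ∑ j, F q α j * P q j) / h q := by
    simp only [div_eq_mul_inv]
    fun_prop (disch := exact hh0 _)
  simp only [pt, px, mminor_eq_det_submatrix _ hA hI]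
  rw [fderiv_det_eq_neg_sum_fderiv_adjugate_mul
    (f := fun q => (F q).submatrix (A.orderEmbOfFin hA) (I.orderEmbOfFin hI))
    (G := fun q r => (D q (A.orderEmbOfFin hA r) + ∑ j, F q (A.orderEmbOfFin hA r) j * P q j) / h q)
    (e := fun s => (0, Pi.single (I.orderEmbOfFin hI s) 1))
    (fun _ _ => hFd _ _ p) (fun _ => hflux _ p)
    (fun _ _ _ => hcurl _ _ _ _) (fun _ _ => eq_neg_of_add_eq_zero_left (hevol _ _ _))]
  congr 1
  refine Finset.sum_congr rfl fun pp _ => Finset.sum_congr rfl fun qq _ => ?_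
  simp only [adjugate_submatrix_orderEmbOfFin, mul_assoc, mul_div_assoc,
    fderiv_const_mul_field_apply]
  ring

/-- Conservation laws for the minors `[F]_{A,I}`:  if `F` is curl-free and satisfies the
evolution equation `∂_t F_{αi} + ∂_i((D_α + Σ_j F_{αj}P_j)/h) = 0`, then
`∂_t [F]_{A,I} = − Σ_{p,q} (−1)^{p+q} ∂_{i_q}([F]_{A∖{α_p},I∖{i_q}} (D_{α_p} + Σ_j F_{α_p j}P_j)/h)`. -/
theorem conservation_law_for_minors (m n : ℕ)
    (F : ℝ × (Fin n → ℝ) → Matrix (Fin m) (Fin n) ℝ)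
    (D : ℝ × (Fin n → ℝ) → Fin m → ℝ)
    (hF : ∀ α i, ContDiff ℝ 2 fun p => F p α i)
    (hD : ∀ α, ContDiff ℝ 2 fun p => D p α)
    (P : ℝ × (Fin n → ℝ) → Fin n → ℝ)
    (hP : P = fun p i => ∑ α, F p α i * D p α)
    (h : ℝ × (Fin n → ℝ) → ℝ)
    (hh : h = fun p => Real.sqrt (∑ α, (D p α) ^ 2 + ∑ i, (P p i) ^ 2 + (1 + (F p)ᵀ * F p).det))
    (hcurl : ∀ p (α : Fin m) (i j : Fin n),
      px j (fun q => F q α i) p = px i (fun q => F q α j) p)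
    (hevol : ∀ p (α : Fin m) (i : Fin n),
      pt (fun q => F q α i) p
        + px i (fun q => (D q α + ∑ j, F q α j * P q j) / h q) p = 0)
    (k : ℕ) (hk1 : 1 ≤ k) (hk2 : k ≤ min m n)
    (A : Finset (Fin m)) (I : Finset (Fin n)) (hA : A.card = k) (hI : I.card = k)
    (p : ℝ × (Fin n → ℝ)) :
    pt (fun q => mminor (F q) A I) p =
      - ∑ pp : Fin k, ∑ qq : Fin k, (-1 : ℝ) ^ ((pp.val + 1) + (qq.val + 1)) *
          px (I.orderEmbOfFin hI qq)
            (fun q =>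
              mminor (F q) (A.erase (A.orderEmbOfFin hA pp)) (I.erase (I.orderEmbOfFin hI qq))
                * (D q (A.orderEmbOfFin hA pp) + ∑ j, F q (A.orderEmbOfFin hA pp) j * P q j)
                / h q) p :=
  conservation_law_for_minors_general m n F D hF hD P hP h hh hcurl hevol k A I hA hI p
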